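/- arXiv:math/0610838 — 2 statements merged into one kernel-verified Lean document; each statement's English description precedes it below -/
import Mathlib

section
/- Let ε₁,…,εₙ be i.i.d. Rademacher. Then sup over unit vectors p ∈ ℝⁿ of P(∑ⱼ pⱼεⱼ ≥ a) equals M(n, a)/2ⁿ, where M(n,a) is the maximal number of vertices of {−1,1}ⁿ contained in a closed Euclidean ball of radius √(n − a²) whose center has norm a. -/
open MeasureTheory ProbabilityTheory Finset
open scoped ENNReal

/-- The Rademacher distribution: `±1` with probability `1/2` each. -/
noncomputable def radMeasure : Measure ℝ :=
  ((1 : ℝ≥0∞) / 2) • Measure.dirac (1 : ℝ) + ((1 : ℝ≥0∞) / 2) • Measure.dirac (-1 : ℝ)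

lemma radMeasure_singleton (x : ℝ) (hx : x = 1 ∨ x = -1) : radMeasure {x} = 2⁻¹ := by
  rcases hx with rfl | rfl <;>
    simp [radMeasure, Measure.dirac_apply', measurableSet_singleton, Set.indicator_apply,
      ENNReal.div_eq_inv_mul] <;> norm_num

/-- For i.i.d. Rademacher `ε₁, …, εₙ` and `0 < a ≤ √n`, the supremum over unit vectors `p`
of `P(∑ pⱼ εⱼ ≥ a)` equals `M(n,a)/2ⁿ`, where `M(n,a)` is the maximal number of vertices of
`{-1,1}ⁿ` contained in a closed ball of radius `√(n - a²)` whose center has norm `a`. -/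
theorem stmt5 {Ω : Type*} [MeasurableSpace Ω] {μ : Measure Ω} [IsProbabilityMeasure μ]
    {n : ℕ} (ε : Fin n → Ω → ℝ)
    (hval : ∀ i ω, ε i ω = 1 ∨ ε i ω = -1)
    (hindep : iIndepFun ε μ)
    (hdist : ∀ i, μ.map (ε i) = radMeasure)
    (a : ℝ) (ha : 0 < a) (ha' : a ≤ Real.sqrt n) :
    (⨆ p : {p : Fin n → ℝ // ∑ i, (p i) ^ 2 = 1}, μ {ω | a ≤ ∑ i, p.1 i * ε i ω}) =
      ((sSup {m : ℕ | ∃ c : Fin n → ℝ, ∑ i, (c i) ^ 2 = a ^ 2 ∧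
          m = Nat.card {v : Fin n → Bool //
            ∑ i, ((if v i then (1 : ℝ) else -1) - c i) ^ 2 ≤ (n : ℝ) - a ^ 2}} : ℕ) : ℝ≥0∞)
        / 2 ^ n := by
  classical
  have ha0 : a ≠ 0 := ne_of_gt ha
  have hn : 0 < n := by
    rcases Nat.eq_zero_or_pos n with h | h
    · exfalso; rw [h] at ha'; simp at ha'; linarith
    · exact h
  -- abbreviations
  set w : (Fin n → Bool) → Fin n → ℝ := fun v i => if v i then (1 : ℝ) else -1 with hwdef
  have hw_val : ∀ v i, w v i = 1 ∨ w v i = -1 := by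
    intro v i; by_cases h : v i <;> simp [w, h]
  have hw_sq : ∀ v i, w v i ^ 2 = 1 := by
    intro v i; rcases hw_val v i with h | h <;> rw [h] <;> norm_num
  set N : (Fin n → ℝ) → ℕ := fun c => Nat.card {v : Fin n → Bool //
      ∑ i, ((if v i then (1 : ℝ) else -1) - c i) ^ 2 ≤ (n : ℝ) - a ^ 2} with hNdef
  set S : Set ℕ := {m : ℕ | ∃ c : Fin n → ℝ, ∑ i, (c i) ^ 2 = a ^ 2 ∧ m = N c} with hSdef
  -- a.e. measurability
  have haem : ∀ i, AEMeasurable (ε i) μ := by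
    intro i
    apply aemeasurable_of_map_neZero
    rw [hdist i]
    refine ⟨fun h => ?_⟩
    have := radMeasure_singleton 1 (Or.inl rfl)
    rw [h] at this
    simp only [Measure.coe_zero, Pi.zero_apply] at this
    exact ENNReal.inv_ne_zero.mpr (by norm_num) this.symm
  have hpre : ∀ i (x : ℝ), x = 1 ∨ x = -1 → μ (ε i ⁻¹' {x}) = 2⁻¹ := by
    intro i x hx
    rw [← Measure.map_apply_of_aemeasurable (haem i) (measurableSet_singleton x), hdist i,
      radMeasure_singleton x hx]
  -- measure of atoms
  have hA : ∀ v : Fin n → Bool, μ (⋂ i, ε i ⁻¹' {w v i}) = 2⁻¹ ^ n := by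
    intro v
    rw [hindep.meas_iInter (fun i => ⟨{w v i}, measurableSet_singleton _, rfl⟩)]
    simp only [hpre _ _ (hw_val v _)]
    simp [Finset.prod_const]
  -- the key per-p computation
  have key : ∀ p : Fin n → ℝ, μ {ω | a ≤ ∑ i, p i * ε i ω} =
      ((univ.filter (fun v : Fin n → Bool => a ≤ ∑ i, p i * w v i)).card : ℝ≥0∞) * 2⁻¹ ^ n := by
    intro p
    set s := {ω | a ≤ ∑ i, p i * ε i ω} with hs
    set G := univ.filter (fun v : Fin n → Bool => a ≤ ∑ i, p i * w v i) with hGdef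
    set B := univ.filter (fun v : Fin n → Bool => ¬ a ≤ ∑ i, p i * w v i) with hBdef
    have vtx : ∀ ω : Ω, ∃ v : Fin n → Bool, ω ∈ ⋂ i, ε i ⁻¹' {w v i} ∧
        (∑ i, p i * ε i ω) = ∑ i, p i * w v i := by
      intro ω
      refine ⟨fun i => ε i ω = 1, ?_, ?_⟩
      · simp only [Set.mem_iInter, Set.mem_preimage, Set.mem_singleton_iff]
        intro i
        by_cases h : ε i ω = 1
        · simp [w, h]
        · rcases hval i ω with h' | h'
          · exact absurd h' h
          · simp [w, h, h']
      · refine Finset.sum_congr rfl fun i _ => ?_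
        by_cases h : ε i ω = 1
        · simp [w, h]
        · rcases hval i ω with h' | h'
          · exact absurd h' h
          · simp [w, h, h']
            norm_num
    have hsub : s ⊆ ⋃ v ∈ G, ⋂ i, ε i ⁻¹' {w v i} := by
      intro ω hω
      obtain ⟨v, hv1, hv2⟩ := vtx ω
      have hvG : v ∈ G := Finset.mem_filter.mpr ⟨Finset.mem_univ _, hv2 ▸ hω⟩
      exact Set.mem_biUnion hvG hv1
    have hsub' : sᶜ ⊆ ⋃ v ∈ B, ⋂ i, ε i ⁻¹' {w v i} := by
      intro ω hω
      obtain ⟨v, hv1, hv2⟩ := vtx ω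
      have hvB : v ∈ B := Finset.mem_filter.mpr ⟨Finset.mem_univ _, hv2 ▸ hω⟩
      exact Set.mem_biUnion hvB hv1
    have h1 : μ s ≤ (G.card : ℝ≥0∞) * 2⁻¹ ^ n := by
      refine le_trans (measure_mono hsub) (le_trans (measure_biUnion_finset_le _ _) ?_)
      simp only [hA]
      rw [Finset.sum_const, nsmul_eq_mul]
    have h2 : μ sᶜ ≤ (B.card : ℝ≥0∞) * 2⁻¹ ^ n := by
      refine le_trans (measure_mono hsub') (le_trans (measure_biUnion_finset_le _ _) ?_)
      simp only [hA]
      rw [Finset.sum_const, nsmul_eq_mul]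
    have hGB : (G.card : ℝ≥0∞) * 2⁻¹ ^ n + (B.card : ℝ≥0∞) * 2⁻¹ ^ n = 1 := by
      rw [← add_mul, ← Nat.cast_add, hGdef, hBdef,
        Finset.card_filter_add_card_filter_not, Finset.card_univ]
      have : (Fintype.card (Fin n → Bool)) = 2 ^ n := by simp
      rw [this]
      rw [show ((2 ^ n : ℕ) : ℝ≥0∞) = 2 ^ n by push_cast; ring, ← mul_pow,
        ENNReal.mul_inv_cancel (by norm_num) (by norm_num), one_pow]
    have h3 : (1 : ℝ≥0∞) ≤ μ s + μ sᶜ := by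
      calc (1 : ℝ≥0∞) = μ Set.univ := (measure_univ).symm
        _ = μ (s ∪ sᶜ) := by rw [Set.union_compl_self]
        _ ≤ μ s + μ sᶜ := measure_union_le _ _
    refine le_antisymm h1 ?_
    have hBtop : (B.card : ℝ≥0∞) * 2⁻¹ ^ n ≠ ⊤ :=
      ENNReal.mul_ne_top (ENNReal.natCast_ne_top _) (by simp [ENNReal.inv_ne_top])
    have : (G.card : ℝ≥0∞) * 2⁻¹ ^ n + (B.card : ℝ≥0∞) * 2⁻¹ ^ n ≤
        μ s + (B.card : ℝ≥0∞) * 2⁻¹ ^ n := by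
      calc (G.card : ℝ≥0∞) * 2⁻¹ ^ n + (B.card : ℝ≥0∞) * 2⁻¹ ^ n = 1 := hGB
        _ ≤ μ s + μ sᶜ := h3
        _ ≤ μ s + (B.card : ℝ≥0∞) * 2⁻¹ ^ n := add_le_add_right h2 _
    exact (ENNReal.add_le_add_iff_right hBtop).mp this
  -- equivalence of the counting conditions
  have cond_iff : ∀ (p : Fin n → ℝ), (∑ i, (p i) ^ 2 = 1) → ∀ v : Fin n → Bool,
      (∑ i, (w v i - a * p i) ^ 2 ≤ (n : ℝ) - a ^ 2) ↔ a ≤ ∑ i, p i * w v i := by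
    intro p hp v
    have hexp : ∑ i, (w v i - a * p i) ^ 2 =
        (∑ i, w v i ^ 2) - 2 * a * (∑ i, p i * w v i) + a ^ 2 * (∑ i, p i ^ 2) := by
      rw [Finset.mul_sum, Finset.mul_sum, ← Finset.sum_sub_distrib, ← Finset.sum_add_distrib]
      exact Finset.sum_congr rfl fun i _ => by ring
    have hwsum : ∑ i, w v i ^ 2 = (n : ℝ) := by
      simp [hw_sq v]
    rw [hexp, hwsum, hp, mul_one]
    constructor
    · intro h
      have h2 : 2 * a * a ≤ 2 * a * (∑ i, p i * w v i) := by nlinarith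
      exact le_of_mul_le_mul_left h2 (by linarith)
    · intro h
      nlinarith
  -- N (a • p) equals the good-vertex count
  have card_eq : ∀ (p : Fin n → ℝ), (∑ i, (p i) ^ 2 = 1) →
      ((univ.filter (fun v : Fin n → Bool => a ≤ ∑ i, p i * w v i)).card : ℕ) =
        N (fun i => a * p i) := by
    intro p hp
    have h2 : N (fun i => a * p i) =
        (univ.filter (fun v : Fin n → Bool => a ≤ ∑ i, p i * w v i)).card := by
      show Nat.card {v : Fin n → Bool //
          ∑ i, ((if v i then (1 : ℝ) else -1) - a * p i) ^ 2 ≤ (n : ℝ) - a ^ 2} = _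
      rw [Nat.card_eq_fintype_card, Fintype.card_subtype]
      congr 1
      refine Finset.filter_congr fun v _ => ?_
      exact cond_iff p hp v
    exact h2.symm
  -- S is bounded above
  have hbdd : BddAbove S := by
    refine ⟨2 ^ n, ?_⟩
    rintro m ⟨c, _, rfl⟩
    calc N c ≤ Nat.card (Fin n → Bool) :=
          Nat.card_le_card_of_injective _ (Subtype.val_injective)
      _ = 2 ^ n := by simp [Nat.card_eq_fintype_card]
  -- S is nonempty
  have hSne : S.Nonempty := by
    refine ⟨N (fun i => a * (if i = ⟨0, hn⟩ then (1:ℝ) else 0)), fun i => a * (if i = ⟨0, hn⟩ then (1:ℝ) else 0), ?_, rfl⟩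
    rw [show (a : ℝ) ^ 2 = ∑ i : Fin n, (if i = ⟨0, hn⟩ then a ^ 2 else 0) by
      rw [Finset.sum_ite_eq' univ (⟨0, hn⟩ : Fin n) (fun _ => a ^ 2)]; simp]
    refine Finset.sum_congr rfl fun i _ => ?_
    by_cases h : i = ⟨0, hn⟩ <;> simp [h]
  -- membership of each N (a•p) in S
  have hmem : ∀ (p : Fin n → ℝ), (∑ i, (p i) ^ 2 = 1) → N (fun i => a * p i) ∈ S := by
    intro p hp
    refine ⟨fun i => a * p i, ?_, rfl⟩
    have : ∑ i, (a * p i) ^ 2 = a ^ 2 * ∑ i, (p i) ^ 2 := by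
      rw [Finset.mul_sum]; exact Finset.sum_congr rfl fun i _ => by ring
    rw [this, hp, mul_one]
  have hdiv : ∀ m : ℕ, ((m : ℝ≥0∞) / 2 ^ n) = (m : ℝ≥0∞) * 2⁻¹ ^ n := by
    intro m
    rw [div_eq_mul_inv, ENNReal.inv_pow]
  rw [hdiv]
  apply le_antisymm
  · apply iSup_le
    rintro ⟨p, hp⟩
    rw [key p, card_eq p hp]
    gcongr
    exact_mod_cast Nat.cast_le.mpr (le_csSup hbdd (hmem p hp))
  · obtain ⟨c, hc, hcN⟩ := Nat.sSup_mem hSne hbdd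
    set p : Fin n → ℝ := fun i => a⁻¹ * c i with hpdef
    have hp : ∑ i, (p i) ^ 2 = 1 := by
      have : ∑ i, (p i) ^ 2 = a⁻¹ ^ 2 * ∑ i, (c i) ^ 2 := by
        rw [Finset.mul_sum]; exact Finset.sum_congr rfl fun i _ => by ring
      rw [this, hc]
      field_simp
    have hap : (fun i => a * p i) = c := by
      funext i; rw [hpdef]; field_simp
    have : ((sSup S : ℕ) : ℝ≥0∞) * 2⁻¹ ^ n = μ {ω | a ≤ ∑ i, p i * ε i ω} := by
      rw [key p, card_eq p hp, hap, ← hcN]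
    rw [this]
    exact le_iSup (fun q : {p : Fin n → ℝ // ∑ i, (p i) ^ 2 = 1} =>
      μ {ω | a ≤ ∑ i, q.1 i * ε i ω}) ⟨p, hp⟩
end

section
/- For two i.i.d. standard normal variables Z₁, Z₂ and 1 < a < √2, P((Z₁ + Z₂)/√(Z₁² + Z₂²) ≥ a) = 1 − C(a/√(2 − a²)), where C is the standard Cauchy cdf C(x) = 1/2 + (1/π) arctan x. -/
open MeasureTheory ProbabilityTheory Real Set
open scoped ENNReal

lemma aux_integral_r : ∫ r in Set.Ioi (0:ℝ), r * Real.exp (-r^2/2) = 1 := by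
  simp only [neg_div]
  have hint : IntegrableOn (fun r : ℝ => r * Real.exp (-(r^2/2))) (Set.Ioi 0) := by
    have := (integrable_mul_exp_neg_mul_sq (b := (1/2 : ℝ)) (by norm_num)).integrableOn
      (s := Set.Ioi (0:ℝ))
    refine this.congr_fun (fun x _ => by ring_nf) measurableSet_Ioi
  have hderiv : ∀ x ∈ Set.Ici (0:ℝ),
      HasDerivAt (fun r : ℝ => -Real.exp (-(r^2/2))) (x * Real.exp (-(x^2/2))) x := by
    intro x _
    have h1 : HasDerivAt (fun r : ℝ => -(r^2/2)) (-x) x := by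
      have h := ((hasDerivAt_pow 2 x).div_const 2).neg
      exact h.congr_deriv (by norm_num)
    have h2 := (h1.exp).neg
    exact h2.congr_deriv (by ring)
  have htend : Filter.Tendsto (fun r : ℝ => -Real.exp (-(r^2/2))) Filter.atTop (nhds 0) := by
    rw [show (0:ℝ) = -0 by ring]
    refine (Real.tendsto_exp_atBot.comp ?_).neg
    have h3 : Filter.Tendsto (fun x : ℝ => -(x^2)) Filter.atTop Filter.atBot :=
      Filter.tendsto_neg_atTop_atBot.comp (Filter.tendsto_pow_atTop two_ne_zero)
    have h4 := Filter.Tendsto.atBot_div_const (r := (2:ℝ)) (by norm_num) h3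
    refine h4.congr (fun x => by ring)
  have := MeasureTheory.integral_Ioi_of_hasDerivAt_of_tendsto' hderiv hint htend
  simpa using this

lemma aux_sin {c : ℝ} (hc0 : 0 < c) (hc1 : c ≤ 1) {φ : ℝ} (h1 : -π < φ) (h2 : φ < π + π/2) :
    c ≤ Real.sin φ ↔ Real.arcsin c ≤ φ ∧ φ ≤ π - Real.arcsin c := by
  have hπ := Real.pi_pos
  set b := Real.arcsin c with hbdef
  have hb0 : 0 < b := Real.arcsin_pos.2 hc0
  have hbh : b ≤ π/2 := Real.arcsin_le_pi_div_two c
  have hsb : Real.sin b = c := Real.sin_arcsin (by linarith) hc1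
  constructor
  · intro h
    have hφpos : 0 < φ := by
      by_contra hn
      push_neg at hn
      have := Real.sin_nonpos_of_nonpos_of_neg_pi_le hn (le_of_lt h1)
      linarith
    have hφltπ : φ < π := by
      by_contra hn
      push_neg at hn
      have h5 : Real.sin φ = -Real.sin (φ - π) := by
        rw [show φ = (φ - π) + π by ring, Real.sin_add_pi]; ring_nf
      have h6 : 0 ≤ Real.sin (φ - π) :=
        Real.sin_nonneg_of_nonneg_of_le_pi (by linarith) (by linarith)
      linarith
    constructor
    · rcases le_or_gt φ (π/2) with hle | hgt
      · have := Real.monotone_arcsin h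
        rwa [Real.arcsin_sin (by linarith) hle] at this
      · linarith
    · rcases le_or_gt φ (π/2) with hle | hgt
      · linarith
      · have h7 : c ≤ Real.sin (π - φ) := by rwa [Real.sin_pi_sub]
        have := Real.monotone_arcsin h7
        rw [Real.arcsin_sin (by linarith) (by linarith)] at this
        linarith
  · rintro ⟨hl, hr⟩
    rcases le_or_gt φ (π/2) with hle | hgt
    · calc c = Real.sin b := hsb.symm
        _ ≤ Real.sin φ := by
          rcases eq_or_lt_of_le hl with rfl | hlt
          · exact le_rfl
          · exact le_of_lt (Real.strictMonoOn_sin ⟨by linarith, by linarith⟩ ⟨by linarith, hle⟩ hlt)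
    · have h8 : Real.sin b ≤ Real.sin (π - φ) := by
        rcases eq_or_lt_of_le (show b ≤ π - φ by linarith) with heq | hlt
        · rw [heq]
        · exact le_of_lt (Real.strictMonoOn_sin ⟨by linarith, by linarith⟩
            ⟨by linarith, by linarith⟩ hlt)
      rw [Real.sin_pi_sub] at h8
      linarith

lemma aux_angle {a : ℝ} (ha : 1 < a) (ha' : a < Real.sqrt 2) {θ : ℝ} (hθ : θ ∈ Set.Ioo (-π) π) :
    (a ≤ Real.cos θ + Real.sin θ) ↔
      (Real.arcsin (a / Real.sqrt 2) - π/4 ≤ θ ∧ θ ≤ 3*π/4 - Real.arcsin (a / Real.sqrt 2)) := by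
  have hπ := Real.pi_pos
  have hs2 : (0:ℝ) < Real.sqrt 2 := Real.sqrt_pos.2 (by norm_num)
  have h2 : Real.sqrt 2 * Real.sqrt 2 = 2 := Real.mul_self_sqrt (by norm_num)
  have hc0 : 0 < a / Real.sqrt 2 := div_pos (by linarith) hs2
  have hc1 : a / Real.sqrt 2 ≤ 1 := by
    rw [div_le_one hs2]; linarith
  have hkey : Real.cos θ + Real.sin θ = Real.sqrt 2 * Real.sin (θ + π/4) := by
    rw [Real.sin_add, Real.cos_pi_div_four, Real.sin_pi_div_four]
    linear_combination (-(Real.sin θ + Real.cos θ)/2) * h2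
  rw [hkey, ← div_le_iff₀' hs2]
  rw [aux_sin hc0 hc1 (by obtain ⟨h,_⟩ := hθ; linarith) (by obtain ⟨_,h⟩ := hθ; linarith)]
  constructor <;> rintro ⟨u, v⟩ <;> constructor <;> linarith

lemma aux_arcsin_arctan {a : ℝ} (ha : 1 < a) (ha' : a < Real.sqrt 2) :
    Real.arcsin (a / Real.sqrt 2) = Real.arctan (a / Real.sqrt (2 - a^2)) := by
  have hs2 : (0:ℝ) < Real.sqrt 2 := Real.sqrt_pos.2 (by norm_num)
  have h2 : Real.sqrt 2 * Real.sqrt 2 = 2 := Real.mul_self_sqrt (by norm_num)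
  have ha2 : a^2 < 2 := by nlinarith
  have hpos : (0:ℝ) < 2 - a^2 := by linarith
  have hmem : a / Real.sqrt 2 ∈ Set.Ioo (-(1:ℝ)) 1 := by
    constructor
    · have : (0:ℝ) < a / Real.sqrt 2 := div_pos (by linarith) hs2
      linarith
    · rw [div_lt_one hs2]; exact ha'
  rw [Real.arcsin_eq_arctan hmem]
  congr 1
  have hsq : (a / Real.sqrt 2)^2 = a^2/2 := by
    rw [div_pow, Real.sq_sqrt (by norm_num : (0:ℝ) ≤ 2)]
  rw [hsq]
  have h1ma : (1 : ℝ) - a^2/2 = (2 - a^2)/2 := by ring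
  rw [h1ma, Real.sqrt_div hpos.le 2]
  have hsp : (0:ℝ) < Real.sqrt (2 - a^2) := Real.sqrt_pos.2 hpos
  field_simp

lemma aux_pdf (r θ : ℝ) :
    gaussianPDFReal 0 1 (r * Real.cos θ) * gaussianPDFReal 0 1 (r * Real.sin θ)
      = (2*π)⁻¹ * Real.exp (-r^2/2) := by
  simp only [gaussianPDFReal, NNReal.coe_one, mul_one, sub_zero]
  have hππ : Real.sqrt (2*π) * Real.sqrt (2*π) = 2*π :=
    Real.mul_self_sqrt (by positivity)
  have hcs : Real.sin θ^2 + Real.cos θ^2 = 1 := Real.sin_sq_add_cos_sq θ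
  rw [show (Real.sqrt (2*π))⁻¹ * Real.exp (-(r*Real.cos θ)^2/2)
        * ((Real.sqrt (2*π))⁻¹ * Real.exp (-(r*Real.sin θ)^2/2))
      = (Real.sqrt (2*π) * Real.sqrt (2*π))⁻¹
        * Real.exp (-(r*Real.cos θ)^2/2 + -(r*Real.sin θ)^2/2) from by
    rw [Real.exp_add, mul_inv]; ring]
  rw [hππ]
  congr 2
  linear_combination (-(r^2)/2) * hcs

lemma aux_prod_density :
    (gaussianReal 0 1).prod (gaussianReal 0 1)
      = (volume : Measure (ℝ × ℝ)).withDensity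
          (fun p => ENNReal.ofReal (gaussianPDFReal 0 1 p.1 * gaussianPDFReal 0 1 p.2)) := by
  refine Measure.prod_eq fun s t hs ht => ?_
  rw [withDensity_apply _ (hs.prod ht), Measure.volume_eq_prod, ← Measure.prod_restrict]
  have hrw : ∀ p : ℝ × ℝ, ENNReal.ofReal (gaussianPDFReal 0 1 p.1 * gaussianPDFReal 0 1 p.2)
      = gaussianPDF 0 1 p.1 * gaussianPDF 0 1 p.2 := fun p =>
    ENNReal.ofReal_mul (gaussianPDFReal_nonneg _ _ _)
  simp_rw [hrw]
  rw [lintegral_prod_mul (measurable_gaussianPDF 0 1).aemeasurable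
    (measurable_gaussianPDF 0 1).aemeasurable]
  rw [gaussianReal_apply 0 one_ne_zero s, gaussianReal_apply 0 one_ne_zero t]

/-- For independent standard normal `Z₁, Z₂` and `1 < a < √2`,
`P((Z₁+Z₂)/√(Z₁²+Z₂²) ≥ a) = 1 - C(a/√(2-a²))` where `C` is the standard Cauchy cdf. -/
theorem stmt11 {Ω : Type*} [MeasurableSpace Ω] {μ : Measure Ω} [IsProbabilityMeasure μ]
    (Z₁ Z₂ : Ω → ℝ) (hm1 : Measurable Z₁) (hm2 : Measurable Z₂)
    (h1 : μ.map Z₁ = gaussianReal 0 1) (h2 : μ.map Z₂ = gaussianReal 0 1)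
    (hindep : IndepFun Z₁ Z₂ μ)
    (a : ℝ) (ha : 1 < a) (ha' : a < Real.sqrt 2) :
    μ {ω | a ≤ (Z₁ ω + Z₂ ω) / Real.sqrt ((Z₁ ω) ^ 2 + (Z₂ ω) ^ 2)} =
      ENNReal.ofReal
        (1 - (1 / 2 + Real.arctan (a / Real.sqrt (2 - a ^ 2)) / Real.pi)) := by
  have hπ := Real.pi_pos
  set b := Real.arcsin (a / Real.sqrt 2) with hbdef
  have hb0 : 0 < b := Real.arcsin_pos.2 (div_pos (by linarith) (Real.sqrt_pos.2 (by norm_num)))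
  have hb2 : b ≤ π/2 := Real.arcsin_le_pi_div_two _
  set I : Set ℝ := Set.Icc (b - π/4) (3*π/4 - b) with hIdef
  set S : Set (ℝ × ℝ) := {p | a ≤ (p.1 + p.2) / Real.sqrt (p.1^2 + p.2^2)} with hSdef
  have hmf : Measurable fun p : ℝ × ℝ => (p.1 + p.2) / Real.sqrt (p.1^2 + p.2^2) :=
    (measurable_fst.add measurable_snd).div
      (Real.continuous_sqrt.measurable.comp
        ((measurable_fst.pow_const 2).add (measurable_snd.pow_const 2)))
  have hSm : MeasurableSet S := measurableSet_le measurable_const hmf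
  have hmap : μ.map (fun ω => (Z₁ ω, Z₂ ω)) = (gaussianReal 0 1).prod (gaussianReal 0 1) := by
    rw [(indepFun_iff_map_prod_eq_prod_map_map hm1.aemeasurable hm2.aemeasurable).1 hindep,
      h1, h2]
  have hstep1 : μ {ω | a ≤ (Z₁ ω + Z₂ ω) / Real.sqrt ((Z₁ ω)^2 + (Z₂ ω)^2)}
      = ((gaussianReal 0 1).prod (gaussianReal 0 1)) S := by
    rw [← hmap, Measure.map_apply (hm1.prodMk hm2) hSm]
    rfl
  rw [hstep1, aux_prod_density, withDensity_apply _ hSm]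
  set F : ℝ × ℝ → ℝ := fun p => gaussianPDFReal 0 1 p.1 * gaussianPDFReal 0 1 p.2 with hFdef
  have hFnn : ∀ p, 0 ≤ F p := fun p =>
    mul_nonneg (gaussianPDFReal_nonneg _ _ _) (gaussianPDFReal_nonneg _ _ _)
  have hFint : Integrable F (volume : Measure (ℝ × ℝ)) := by
    rw [Measure.volume_eq_prod]
    exact (integrable_gaussianPDFReal 0 1).mul_prod (integrable_gaussianPDFReal 0 1)
  have hlin : ∫⁻ p in S, ENNReal.ofReal (F p) = ENNReal.ofReal (∫ p in S, F p) :=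
    (ofReal_integral_eq_lintegral_ofReal hFint.integrableOn
      (ae_of_all _ fun p => hFnn p)).symm
  rw [hlin]
  have hpolar : ∫ p in S, F p = 1 * ((2*π)⁻¹ * (π - 2*b)) := by
    rw [← integral_indicator hSm, ← integral_comp_polarCoord_symm]
    have hEq : Set.EqOn (fun p : ℝ × ℝ => p.1 • (S.indicator F) (polarCoord.symm p))
        (fun p : ℝ × ℝ => (p.1 * Real.exp (-p.1^2/2))
          * ((2*π)⁻¹ * (I.indicator (fun _ => (1:ℝ)) p.2)))
        polarCoord.target := by
      intro p hp
      obtain ⟨hr, hθ⟩ := hp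
      obtain ⟨r, θ⟩ := p
      simp only [polarCoord_symm_apply]
      have hr' : (0:ℝ) < r := hr
      have hcs : Real.sin θ^2 + Real.cos θ^2 = 1 := Real.sin_sq_add_cos_sq θ
      have hsq : (r * Real.cos θ)^2 + (r * Real.sin θ)^2 = r^2 := by nlinarith
      have hmem : ((r * Real.cos θ, r * Real.sin θ) ∈ S) ↔ θ ∈ I := by
        rw [hSdef, Set.mem_setOf_eq]
        simp only [hsq, Real.sqrt_sq hr'.le]
        rw [show r * Real.cos θ + r * Real.sin θ = r * (Real.cos θ + Real.sin θ) by ring,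
          mul_div_cancel_left₀ _ hr'.ne']
        exact aux_angle ha ha' hθ
      by_cases hθI : θ ∈ I
      · rw [Set.indicator_of_mem (hmem.2 hθI), Set.indicator_of_mem hθI, hFdef]
        simp only [smul_eq_mul]
        rw [aux_pdf r θ]
        ring
      · rw [Set.indicator_of_notMem (fun hc => hθI (hmem.1 hc)),
          Set.indicator_of_notMem hθI]
        simp
    rw [show polarCoord.target = Set.Ioi (0:ℝ) ×ˢ Set.Ioo (-π) π from rfl] at hEq ⊢
    rw [setIntegral_congr_fun (measurableSet_Ioi.prod measurableSet_Ioo) hEq]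
    rw [Measure.volume_eq_prod]
    rw [show (∫ x in Set.Ioi (0:ℝ) ×ˢ Set.Ioo (-π) π,
          x.1 * Real.exp (-x.1^2/2) * ((2*π)⁻¹ * I.indicator (fun _ => (1:ℝ)) x.2)
          ∂((volume : Measure ℝ).prod volume))
        = (∫ r in Set.Ioi (0:ℝ), r * Real.exp (-r^2/2))
          * (∫ θ in Set.Ioo (-π) π, (2*π)⁻¹ * I.indicator (fun _ => (1:ℝ)) θ) from
      MeasureTheory.setIntegral_prod_mul (fun r : ℝ => r * Real.exp (-r^2/2))
        (fun θ : ℝ => (2*π)⁻¹ * I.indicator (fun _ => (1:ℝ)) θ)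
        (Set.Ioi 0) (Set.Ioo (-π) π)]
    congr 1
    · exact aux_integral_r
    · rw [integral_const_mul, setIntegral_indicator measurableSet_Icc]
      have hsub : Set.Ioo (-π) π ∩ I = I := by
        refine Set.inter_eq_self_of_subset_right fun x hx => ?_
        obtain ⟨hx1, hx2⟩ := hx
        constructor <;> [linarith; linarith]
      rw [hsub]
      simp only [integral_const, smul_eq_mul, mul_one, measureReal_def, Measure.restrict_apply_univ]
      rw [hIdef, Real.volume_Icc]
      rw [ENNReal.toReal_ofReal (by linarith)]
      ring
  rw [hpolar]
  congr 1
  rw [hbdef, aux_arcsin_arctan ha ha']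
  field_simp
  ring
end
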